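/- arXiv:1903.04993 — 5 statements merged into one kernel-verified Lean document; each statement's English description precedes it below -/
import Mathlib

section
/- Let L be the first-order language with exactly one binary relation symbol R and no other symbols, and let φ be the sentence ∀x ∃y R(y,x). Then there is no L-sentence ψ such that for every L-structure M, M satisfies ψ if and only if M has a nonempty substructure satisfying φ. In other words, θ(φ) is not expressible by a first-order sentence. -/
open FirstOrder Language

/-- The first-order language with exactly one binary relation symbol `R`. -/
def binRelLang : FirstOrder.Language where
  Functions := fun _ => Empty
  Relations := fun n => match n with
    | 2 => Unit
    | _ => Empty

/-- The binary relation symbol of `binRelLang`. -/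
def binRelSymb : binRelLang.Relations 2 := Unit.unit

/-- The `binRelLang`-structure on `M` interpreting `R` as `r`. -/
def binRelStructure {M : Type*} (r : M → M → Prop) : binRelLang.Structure M where
  funMap := fun {_} f _ => f.elim
  RelMap := fun {n} R x =>
    match n, R, x with
    | 2, _, x => r (x 0) (x 1)
/-- The sentence `∀ x ∃ y R(y, x)` ("there is no `R`-minimal element"). -/
def noMinimalSentence : binRelLang.Sentence :=
  ∀' ∃' (binRelSymb.boundedFormula₂ (&1) (&0))


open Language.Structure

-- every binRelLang structure is of the form binRelStructure
lemma binRel_structure_eq {M : Type*} (S : binRelLang.Structure M) :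
    S = binRelStructure (fun a b => S.RelMap binRelSymb ![a, b]) := by
  rcases S with ⟨fm, rm⟩
  unfold binRelStructure
  congr 1
  · funext n f x
    exact f.elim
  · funext n R x
    match n, R with
    | 2, R =>
      have hx : x = ![x 0, x 1] := by funext i; fin_cases i <;> rfl
      show rm R x = rm binRelSymb ![x 0, x 1]
      rw [← hx]
      cases R
      rfl

-- realize of noMinimalSentence
lemma realize_noMinimal {M : Type*} (r : M → M → Prop) :
    letI : binRelLang.Structure M := binRelStructure r
    (M ⊨ noMinimalSentence ↔ ∀ x : M, ∃ y : M, r y x) := by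
  letI : binRelLang.Structure M := binRelStructure r
  simp only [noMinimalSentence, Sentence.Realize, Formula.Realize,
    BoundedFormula.realize_all, BoundedFormula.realize_ex,
    Relations.boundedFormula₂, Relations.boundedFormula, BoundedFormula.realize_rel]
  constructor
  · intro h x
    obtain ⟨y, hy⟩ := h x
    exact ⟨y, hy⟩
  · intro h x
    obtain ⟨y, hy⟩ := h x
    exact ⟨y, hy⟩

/-- No first-order sentence `ψ` expresses "`M` has a nonempty substructure
satisfying `∀ x ∃ y R(y, x)`", i.e. `θ(φ)` is not first-order expressible. -/
theorem theta_noMinimal_not_firstOrder_expressible :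
    ¬ ∃ ψ : binRelLang.Sentence, ∀ (M : Type u) (r : M → M → Prop),
      letI : binRelLang.Structure M := binRelStructure r
      (M ⊨ ψ ↔ ∃ S : binRelLang.Substructure M, (S : Set M).Nonempty ∧
        (S : Type _) ⊨ noMinimalSentence) := by
  rintro ⟨ψ, H⟩
  -- finite linear orders
  let Mi : ℕ → Type u := fun i => ULift.{u} (Fin (i + 1))
  let r : ∀ i, Mi i → Mi i → Prop := fun _ a b => a.down < b.down
  letI : ∀ i, binRelLang.Structure (Mi i) := fun i => binRelStructure (r i)
  haveI : ∀ i, Nonempty (Mi i) := fun i => ⟨⟨0⟩⟩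
  -- no finite linear order satisfies ψ
  have hfin : ∀ i, ¬ (Mi i ⊨ ψ) := by
    intro i hψ
    obtain ⟨S, ⟨s0, hs0⟩, hS⟩ := (H (Mi i) (r i)).mp hψ
    rw [binRel_structure_eq (Substructure.inducedStructure (S := S))] at hS
    have h2 := (realize_noMinimal _).mp hS
    -- get a minimal element of S, contradiction
    let g : S → ℕ := fun x => (x : Mi i).down.val
    have hT : (Set.range g).Nonempty := ⟨g ⟨s0, hs0⟩, Set.mem_range_self _⟩
    obtain ⟨x, hx⟩ := Nat.sInf_mem hT
    obtain ⟨y, hy⟩ := h2 x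
    have hlt : g y < g x := hy
    rw [hx] at hlt
    have h3 : sInf (Set.range g) ≤ g y := Nat.sInf_le ⟨y, rfl⟩
    omega
  -- ultraproduct
  let P := ((Filter.hyperfilter ℕ : Ultrafilter ℕ) : Filter ℕ).Product Mi
  letI iP : binRelLang.Structure P := Ultraproduct.structure
  have hP : ¬ (P ⊨ ψ) := by
    rw [Ultraproduct.sentence_realize]
    intro h
    obtain ⟨i, hi⟩ := h.exists
    exact hfin i hi
  apply hP
  let rP : P → P → Prop := fun a b => RelMap binRelSymb ![a, b]
  have hiP : iP = binRelStructure rP := binRel_structure_eq _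
  have key := H P rP
  rw [← hiP] at key
  apply key.mpr
  -- the descending chain
  let f : ℕ → ∀ i, Mi i := fun k i => ULift.up ⟨i - k, by omega⟩
  let a : ℕ → P := fun k => (f k : P)
  have ha : ∀ k, rP (a (k + 1)) (a k) := by
    intro k
    have hcast : ![a (k + 1), a k] = fun j => ((![f (k + 1), f k] j : ∀ i, Mi i) : P) := by
      funext j; fin_cases j <;> rfl
    show RelMap binRelSymb ![a (k + 1), a k]
    rw [hcast]
    refine (relMap_quotient_mk' _ binRelSymb ![f (k + 1), f k]).mpr ?_
    have : ∀ᶠ i in (Filter.atTop : Filter ℕ), k < i :=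
      Filter.eventually_atTop.2 ⟨k + 1, fun i hi => hi⟩
    have h4 : ∀ᶠ i in ((Filter.hyperfilter ℕ : Ultrafilter ℕ) : Filter ℕ), k < i :=
      Nat.hyperfilter_le_atTop this
    refine h4.mono fun i hi => ?_
    show (i - (k + 1) : ℕ) < i - k
    omega
  let Ssub : binRelLang.Substructure P :=
    { carrier := Set.range a, fun_mem := fun {n} F _ _ => F.elim }
  refine ⟨Ssub, ⟨a 0, Set.mem_range_self 0⟩, ?_⟩
  · rw [binRel_structure_eq (Substructure.inducedStructure)]
    refine (realize_noMinimal _).mpr fun x => ?_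
    obtain ⟨k, hk⟩ := x.2
    refine ⟨⟨a (k + 1), Set.mem_range_self _⟩, ?_⟩
    show RelMap binRelSymb ![(a (k+1) : P), (x : P)]
    rw [← hk]
    exact ha k
end

section
/- Let L be a first-order language, φ an L-sentence, ι an index type, D an ultrafilter on ι, and (Mᵢ)ᵢ a family of nonempty L-structures. If the set of indices i such that Mᵢ has a nonempty substructure satisfying φ belongs to D, then the ultraproduct ∏_D Mᵢ has a nonempty substructure satisfying φ. In other words, θ(φ) is preserved under ultraproducts. -/
/-!
Choose nonempty substructures `Sᵢ ≤ Mᵢ` satisfying `φ` for `D`-almost every `i` (and `Sᵢ = Mᵢ`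
elsewhere). By Łoś's theorem `∏_D Sᵢ ⊨ φ`, and the inclusions `Sᵢ ↪ Mᵢ` induce an embedding
`∏_D Sᵢ ↪ ∏_D Mᵢ`, whose range is the required substructure.
-/

open FirstOrder Language Structure

namespace FirstOrder.Language.Ultraproduct

variable {L : Language} {ι : Type*} {u : Ultrafilter ι} {M N : ι → Type*}
  [∀ i, L.Structure (M i)] [∀ i, L.Structure (N i)]

theorem relMap_cast {n : ℕ} (r : L.Relations n) (x : Fin n → ∀ i, M i) :
    (RelMap r fun k => (x k : (u : Filter ι).Product M)) ↔
      ∀ᶠ i in (u : Filter ι), RelMap r fun k => x k i :=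
  relMap_quotient_mk' _ r x

noncomputable def mapEmbedding (f : ∀ i, N i ↪[L] M i) :
    (u : Filter ι).Product N ↪[L] (u : Filter ι).Product M where
  toFun := Quotient.map (fun x i => f i (x i)) fun _ _ h => h.mono fun i hi => congrArg (f i) hi
  inj' := by
    rintro ⟨x⟩ ⟨y⟩ h
    exact Quotient.sound ((Quotient.exact h).mono fun i hi => (f i).injective hi)
  map_fun' {n} F x := by
    refine Quotient.induction_on_pi x fun x => ?_
    calc _ = (((fun i => f i (funMap F fun k => x k i)) : ∀ i, M i) : (u : Filter ι).Product M) :=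
          congrArg (Quotient.map _ _) (funMap_cast F x)
      _ = (((fun i => funMap F fun k => f i (x k i)) : ∀ i, M i) : (u : Filter ι).Product M) := by
          simp only [Embedding.map_fun, Function.comp_def]
      _ = _ := (funMap_cast F fun k i => f i (x k i)).symm
  map_rel' {n} r x := by
    refine Quotient.induction_on_pi x fun x => ?_
    calc _ ↔ ∀ᶠ i in (u : Filter ι), RelMap r fun k => f i (x k i) :=
          relMap_cast (u := u) r fun k i => f i (x k i)
      _ ↔ ∀ᶠ i in (u : Filter ι), RelMap r fun k => x k i :=
          Filter.eventually_congr (.of_forall fun i => (f i).map_rel r fun k => x k i)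
      _ ↔ _ := (relMap_cast r x).symm

end FirstOrder.Language.Ultraproduct

namespace FirstOrder.Language

variable {L : Language} {M N : Type*} [L.Structure M] [L.Structure N]

theorem Substructure.exists_nonempty_and_imp [Nonempty M] {p : L.Substructure M → Prop}
    {q : Prop} (h : q → ∃ S : L.Substructure M, (S : Set M).Nonempty ∧ p S) :
    ∃ S : L.Substructure M, (S : Set M).Nonempty ∧ (q → p S) := by
  by_cases hq : q
  · obtain ⟨S, hne, hS⟩ := h hq
    exact ⟨S, hne, fun _ => hS⟩
  · exact ⟨⊤, Set.univ_nonempty, hq.elim⟩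

theorem Embedding.exists_substructure_realize_sentence [Nonempty N] (f : N ↪[L] M)
    {φ : L.Sentence} (hφ : N ⊨ φ) : ∃ S : L.Substructure M, (S : Set M).Nonempty ∧ S ⊨ φ :=
  ⟨f.toHom.range, ⟨f (Classical.arbitrary N), _, rfl⟩,
    (StrongHomClass.realize_sentence f.equivRange φ).1 hφ⟩

end FirstOrder.Language

/-- `θ(φ)` is preserved under ultraproducts: if `D`-almost every `Mᵢ` has a
nonempty substructure satisfying `φ`, then so does the ultraproduct `∏_D Mᵢ`. -/
theorem theta_preserved_under_ultraproducts {L : FirstOrder.Language} {ι : Type*}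
    (D : Ultrafilter ι) (M : ι → Type*) [∀ i, L.Structure (M i)] [∀ i, Nonempty (M i)]
    (φ : L.Sentence)
    (h : {i : ι | ∃ S : L.Substructure (M i), (S : Set (M i)).Nonempty ∧ (S : Type _) ⊨ φ} ∈ D) :
    ∃ S : L.Substructure ((D : Filter ι).Product M),
      (S : Set ((D : Filter ι).Product M)).Nonempty ∧ (S : Type _) ⊨ φ := by
  choose S hne hS using fun i =>
    Substructure.exists_nonempty_and_imp (M := M i) (p := fun S : L.Substructure (M i) => S ⊨ φ) id
  have : ∀ i, Nonempty (S i) := fun i => (hne i).to_subtype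
  have hφ : (D : Filter ι).Product (fun i => S i) ⊨ φ :=
    (Ultraproduct.sentence_realize φ).2 (Filter.mem_of_superset h hS)
  exact (Ultraproduct.mapEmbedding fun i => (S i).subtype).exists_substructure_realize_sentence hφ
end

section
/- Let L be the first-order language whose symbols are countably infinitely many constant symbols c₀, c₁, c₂, … (indexed by ℕ) and no function or relation symbols, and let φ be the sentence ∀x ∀y (x = y). Then there is no L-sentence ψ such that for every nonempty L-structure M, M satisfies ψ if and only if M has a substructure whose underlying set has exactly one element. In other words, θ(φ) is not expressible by any first-order sentence of L. -/
/-!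
A one-element substructure exists exactly when all constants have a common value. If a
sentence `ψ` expressed this, then for every finite set `s` of indices, `¬ψ` together with the
equations `cᵢ = cⱼ` (`i, j ∈ s`) would have a model: give one constant outside `s` a different
value. By compactness `¬ψ` together with all equations `cᵢ = cⱼ` has a model, and in that model
all constants coincide, so `ψ` holds there as well.
-/

open FirstOrder Language

universe v w

namespace FirstOrder.Language.constantsOn

open Structure Theory

variable {α : Type v} {M : Type*} [(constantsOn α).Structure M]

/-- A type ascription `(i : (constantsOn α).Constants)` is unfolded away by the elaborator, so
the coercion of `i` into a structure has to go through this map. -/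
def const (i : α) : (constantsOn α).Constants := i

theorem exists_singleton_substructure_iff :
    (∃ S : (constantsOn α).Substructure M, ∃ a : M, (S : Set M) = {a}) ↔
      ∃ a : M, ∀ i : α, (↑(const i) : M) = a := by
  constructor
  · rintro ⟨S, a, hS⟩
    refine ⟨a, fun i => ?_⟩
    simpa [← SetLike.mem_coe, hS] using S.constants_mem (const i)
  · rintro ⟨a, ha⟩
    refine ⟨{ carrier := {a}, fun_mem := fun {n} f _ _ => ?_ }, a, rfl⟩
    cases n with
    | zero => exact funMap_eq_coe_constants.trans (ha f)
    | succ n => exact isEmptyElim f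

def constantsEqualOn (s : Set α) : (constantsOn α).Theory :=
  Set.image2 (fun i j => (Constants.term (const i)).equal (Constants.term (const j))) s s

theorem constantsEqualOn_mono : Monotone (constantsEqualOn (α := α)) :=
  fun _ _ hst => Set.image2_subset hst hst

theorem model_constantsEqualOn_iff {s : Set α} :
    M ⊨ constantsEqualOn s ↔ ∀ i ∈ s, ∀ j ∈ s, (↑(const i) : M) = ↑(const j) := by
  simp only [model_iff, constantsEqualOn, Set.forall_mem_image2]
  simp [Sentence.Realize]

theorem exists_modelType_constantsEqualOn_not_exists_forall_const_eq [Infinite α]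
    (s : Finset α) :
    ∃ N : ModelType.{_, _, w} (constantsEqualOn (s : Set α)),
      ¬ ∃ a : N, ∀ i : α, (↑(const i) : N) = a := by
  classical
  obtain ⟨b, hb⟩ := Infinite.exists_notMem_finset s
  obtain ⟨a, hab⟩ := exists_ne b
  let := constantsOn.structure fun i : α => ULift.up.{w} (decide (i ≠ b))
  have hval : ∀ i : α, (↑(const i) : ULift.{w} Bool) = ULift.up (decide (i ≠ b)) := fun _ => rfl
  have : ULift.{w} Bool ⊨ constantsEqualOn (s : Set α) :=
    model_constantsEqualOn_iff.2 fun i hi j hj => by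
      simp [hval, ne_of_mem_of_not_mem hi hb, ne_of_mem_of_not_mem hj hb]
  refine ⟨ModelType.of _ (ULift.{w} Bool), fun ⟨c, hc⟩ => ?_⟩
  have hab' : (↑(const a) : ULift.{w} Bool) = ↑(const b) := (hc a).trans (hc b).symm
  simp [hval, hab] at hab'

theorem not_exists_sentence_iff_exists_forall_const_eq [Infinite α] :
    ¬ ∃ ψ : (constantsOn α).Sentence,
      ∀ (M : Type (max v w)) [(constantsOn α).Structure M], Nonempty M →
        (M ⊨ ψ ↔ ∃ a : M, ∀ i : α, (↑(const i) : M) = a) := by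
  rintro ⟨ψ, hψ⟩
  classical
  let T : Finset α → (constantsOn α).Theory := fun s => insert ψ.not (constantsEqualOn s)
  have hsat : ∀ s, (T s).IsSatisfiable := by
    intro s
    obtain ⟨N, hN⟩ := exists_modelType_constantsEqualOn_not_exists_forall_const_eq.{v, max v w} s
    have : N ⊨ T s :=
      model_insert_iff.2 ⟨(Sentence.realize_not N).2 fun h => hN ((hψ N inferInstance).1 h),
        inferInstance⟩
    exact Model.isSatisfiable N
  have hdir : Directed (· ⊆ ·) T := Monotone.directed_le fun s t hst =>
    Set.insert_subset_insert (constantsEqualOn_mono (Finset.coe_subset.2 hst))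
  obtain ⟨M⟩ := (isSatisfiable_directed_union_iff hdir).2 hsat
  let N : ModelType.{v, 0, max v w} (⋃ s, T s) := M.ulift
  have hN : ∀ s, N ⊨ T s := fun s => Model.mono inferInstance (Set.subset_iUnion T s)
  obtain ⟨i₀⟩ := (inferInstance : Nonempty α)
  have hconst : ∃ a : N, ∀ i : α, (↑(const i) : N) = a :=
    ⟨↑(const i₀), fun i => model_constantsEqualOn_iff.1 (model_insert_iff.1 (hN {i, i₀})).2
      i (by simp) i₀ (by simp)⟩
  exact (Sentence.realize_not N).1 (model_insert_iff.1 (hN ∅)).1 ((hψ N inferInstance).2 hconst)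

end FirstOrder.Language.constantsOn

/-- In the language with countably many constant symbols `cₙ` (`n : ℕ`) and no
other symbols, no first-order sentence `ψ` expresses "`M` has a substructure whose underlying
set has exactly one element" (i.e. `θ(∀x ∀y, x = y)` restricted to nonempty models is not
first-order expressible). -/
theorem theta_singleton_not_expressible_with_countably_many_constants :
    ¬ ∃ ψ : (Language.constantsOn ℕ).Sentence,
      ∀ (M : Type u) [(Language.constantsOn ℕ).Structure M], Nonempty M →
        (M ⊨ ψ ↔ ∃ S : (Language.constantsOn ℕ).Substructure M, ∃ a : M, (S : Set M) = {a}) := by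
  simp only [constantsOn.exists_singleton_substructure_iff]
  exact constantsOn.not_exists_sentence_iff_exists_forall_const_eq
end

section
/- Let L be a finite first-order language (finitely many function symbols, including constants, and finitely many relation symbols) and φ an L-sentence. The following are equivalent: (i) there is an existential L-sentence χ such that for every nonempty L-structure M, M satisfies χ if and only if some substructure of M satisfies φ; (ii) there is an L-sentence χ with the same property; (iii) every nonempty L-structure B satisfying φ has a finite subset s such that every nonempty L-structure N having the fragment (B, s) has a substructure satisfying φ; (iv) there is a natural number n such that every nonempty L-structure B satisfying φ has a subset s of at most n elements such that every nonempty L-structure N having the fragment (B, s) has a substructure satisfying φ. -/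
open FirstOrder Language Structure

/-- `N` has the fragment `(B, s)`: there is an injection `j : s → N` preserving and
reflecting all relations on tuples from `s`, and agreeing with the partial functions of the
fragment: values of function symbols on tuples from `s` that lie in `s` are mapped by `j` to
the corresponding values in `N`, and conversely values in `N` lying in the range of `j` come
from values lying in `s`. -/
def HasFragment (L : FirstOrder.Language) {B : Type*} [L.Structure B] (s : Set B)
    (N : Type*) [L.Structure N] : Prop :=
  ∃ j : Set.Elem s → N, Function.Injective j ∧
    (∀ (n : ℕ) (R : L.Relations n) (x : Fin n → Set.Elem s),
      RelMap R (fun k => (x k : B)) ↔ RelMap R (fun k => j (x k))) ∧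
    (∀ (n : ℕ) (F : L.Functions n) (x : Fin n → Set.Elem s),
      (∀ h : funMap F (fun k => (x k : B)) ∈ s,
        funMap F (fun k => j (x k)) = j ⟨funMap F (fun k => (x k : B)), h⟩) ∧
      (∀ y : Set.Elem s, funMap F (fun k => j (x k)) = j y →
        ∃ h : funMap F (fun k => (x k : B)) ∈ s,
          j ⟨funMap F (fun k => (x k : B)), h⟩ = j y))

/-!
A fragment of a structure is determined, up to isomorphism, by the *flat type* of a tuple
enumerating it: which of the atomic formulas `xᵢ = xⱼ`, `R(x ∘ v)`, `F(x ∘ v) = xᵢ` it satisfies.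
Tuples of equal flat type therefore force the same structures, and over a finite language there
are only finitely many flat types of `n`-tuples, each quantifier-free definable.

(ii) ⇒ (iii) is compactness: if no finite fragment of a model `B` of `φ` forced `θ(φ)`, choose for
every finite `t ⊆ B` a structure `N_t ⊭ χ` having the fragment `(B, t)`. An ultraproduct of the
`N_t` along an ultrafilter refining the order filter contains a copy of `B`, so it satisfies
`θ(φ)`, hence `χ`, contradicting Łoś. (iii) ⇒ (iv): otherwise an ultraproduct of models of `φ`
needing ever larger forcing fragments is a model of `φ`; by Łoś the flat type of an enumeration of
its finite forcing fragment is realized in almost every factor, by a small fragment which then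
forces `θ(φ)` too. (iv) ⇒ (i): `χ` says that some `n`-tuple has a flat type forcing `θ(φ)`; a
substructure model yields such a tuple by padding an enumeration of its forcing fragment, or, if
it is empty, any tuple at all, whose flat type fixes the nullary relations.
-/

universe u

structure IsFragmentMap (L : Language) {B N : Type*} [L.Structure B] [L.Structure N]
    (s : Set B) (j : s → N) : Prop where
  injective : Function.Injective j
  relMap_iff {n : ℕ} (R : L.Relations n) (x : Fin n → s) :
    RelMap R (fun k => (x k : B)) ↔ RelMap R (fun k => j (x k))
  funMap_eq_iff {n : ℕ} (F : L.Functions n) (x : Fin n → s) (y : s) :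
    funMap F (fun k => (x k : B)) = y ↔ funMap F (fun k => j (x k)) = j y

section FragmentMap

variable {L : Language} {B C N : Type*} [L.Structure B] [L.Structure C] [L.Structure N]

theorem hasFragment_iff {s : Set B} : HasFragment L s N ↔ ∃ j : s → N, IsFragmentMap L s j := by
  constructor
  · rintro ⟨j, hinj, hrel, hfun⟩
    refine ⟨j, hinj, hrel _, fun F x y => ⟨fun h => ?_, fun h => ?_⟩⟩
    · rw [(hfun _ F x).1 (h ▸ y.2)]
      exact congrArg j (Subtype.ext h)
    · obtain ⟨_, hj⟩ := (hfun _ F x).2 y h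
      exact congrArg Subtype.val (hinj hj)
  · rintro ⟨j, hj⟩
    refine ⟨j, hj.injective, fun _ => hj.relMap_iff, fun _ F x => ⟨fun h => ?_, fun y h => ?_⟩⟩
    · exact (hj.funMap_eq_iff F x ⟨_, h⟩).1 rfl
    · have hy := (hj.funMap_eq_iff F x y).2 h
      exact ⟨hy ▸ y.2, congrArg j (Subtype.ext hy)⟩

theorem isFragmentMap_val (s : Set B) : IsFragmentMap L s Subtype.val :=
  ⟨Subtype.val_injective, fun _ _ => Iff.rfl, fun _ _ _ => Iff.rfl⟩

theorem IsFragmentMap.comp {s : Set B} {t : Set C} {j : s → C} {j' : t → N}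
    (hj' : IsFragmentMap L t j') (hj : IsFragmentMap L s j) (hjt : ∀ x, j x ∈ t) :
    IsFragmentMap L s (j' ∘ Set.codRestrict j t hjt) where
  injective := hj'.injective.comp ((Set.injective_codRestrict hjt).2 hj.injective)
  relMap_iff R x := (hj.relMap_iff R x).trans (hj'.relMap_iff R (Set.codRestrict j t hjt ∘ x))
  funMap_eq_iff F x y := (hj.funMap_eq_iff F x y).trans
    (hj'.funMap_eq_iff F (Set.codRestrict j t hjt ∘ x) (Set.codRestrict j t hjt y))

theorem HasFragment.of_isFragmentMap {s : Set B} {t : Set C} {j : s → C}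
    (hj : IsFragmentMap L s j) (hjt : ∀ x, j x ∈ t) (h : HasFragment L t N) :
    HasFragment L s N := by
  obtain ⟨j', hj'⟩ := hasFragment_iff.1 h
  exact hasFragment_iff.2 ⟨_, hj'.comp hj hjt⟩

theorem HasFragment.mono {s t : Set B} (hst : s ⊆ t) (h : HasFragment L t N) :
    HasFragment L s N :=
  h.of_isFragmentMap (isFragmentMap_val s) fun x => hst x.2

theorem hasFragment_self (s : Set B) : HasFragment L s B :=
  hasFragment_iff.2 ⟨_, isFragmentMap_val s⟩

end FragmentMap

inductive FlatAtom (L : Language) (m : ℕ)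
  | eq (i j : Fin m)
  | rel {k : ℕ} (R : L.Relations k) (v : Fin k → Fin m)
  | func {k : ℕ} (F : L.Functions k) (v : Fin k → Fin m) (i : Fin m)

namespace FlatAtom

variable {L : Language} {m : ℕ}

instance [Finite (Σ k, L.Functions k)] [Finite (Σ k, L.Relations k)] :
    Finite (FlatAtom L m) :=
  Finite.of_surjective
    (fun a : (Fin m × Fin m) ⊕ (Σ R : Σ k, L.Relations k, Fin R.1 → Fin m) ⊕
        (Σ F : Σ k, L.Functions k, (Fin F.1 → Fin m) × Fin m) =>
      match a with
      | .inl (i, j) => eq i j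
      | .inr (.inl ⟨⟨_, R⟩, v⟩) => rel R v
      | .inr (.inr ⟨⟨_, F⟩, v, i⟩) => func F v i)
    (by
      rintro (⟨i, j⟩ | ⟨R, v⟩ | ⟨F, v, i⟩)
      exacts [⟨.inl (i, j), rfl⟩, ⟨.inr (.inl ⟨⟨_, R⟩, v⟩), rfl⟩,
        ⟨.inr (.inr ⟨⟨_, F⟩, v, i⟩), rfl⟩])

def Holds {M : Type*} [L.Structure M] (y : Fin m → M) : FlatAtom L m → Prop
  | eq i j => y i = y j
  | rel R v => RelMap R (y ∘ v)
  | func F v i => funMap F (y ∘ v) = y i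

def formula : FlatAtom L m → L.BoundedFormula Empty m
  | eq i j => (Term.var (.inr i)).bdEqual (Term.var (.inr j))
  | rel R v => R.boundedFormula fun q => Term.var (.inr (v q))
  | func F v i => (Term.func F fun q => Term.var (.inr (v q))).bdEqual (Term.var (.inr i))

theorem isQF_formula (a : FlatAtom L m) : a.formula.IsQF := by
  cases a <;>
    first
    | exact (BoundedFormula.IsAtomic.equal _ _).isQF
    | exact (BoundedFormula.IsAtomic.rel _ _).isQF

@[simp]
theorem realize_formula {M : Type*} [L.Structure M] (a : FlatAtom L m) {v : Empty → M}
    {y : Fin m → M} : a.formula.Realize v y ↔ a.Holds y := by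
  cases a <;> simp [formula, Holds, Function.comp_def]

end FlatAtom

section FlatType

variable {L : Language} {m : ℕ} {B C M N : Type*} [L.Structure B] [L.Structure C]
  [L.Structure M] [L.Structure N]

variable (L) in
def flatType (y : Fin m → M) : Set (FlatAtom L m) :=
  {a | a.Holds y}

theorem flatType_embedding_comp (f : M ↪[L] N) (y : Fin m → M) :
    flatType L (f ∘ y) = flatType L y := by
  ext (_ | ⟨R, v⟩ | ⟨F, v, i⟩)
  · exact f.injective.eq_iff
  · exact f.map_rel R (y ∘ v)
  · simp only [flatType, Set.mem_ofPred_eq, FlatAtom.Holds, Function.comp_assoc, ← f.map_fun,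
      Function.comp_apply, f.injective.eq_iff]

def Embedding.ofFlatAtomHolds (f : B → M)
    (hf : ∀ {m : ℕ} (x : Fin m → B) (a : FlatAtom L m), a.Holds (f ∘ x) ↔ a.Holds x) :
    B ↪[L] M where
  toFun := f
  inj' a b h := (hf ![a, b] (.eq 0 1)).1 h
  map_fun' F x := ((hf (Fin.cons (funMap F x) x) (.func F Fin.succ 0)).2 rfl).symm
  map_rel' R x := hf x (.rel R id)

theorem IsFragmentMap.holds_comp_iff {s : Set B} {j : s → M} (hj : IsFragmentMap L s j)
    (x : Fin m → s) (a : FlatAtom L m) :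
    a.Holds (j ∘ x) ↔ a.Holds fun k => (x k : B) := by
  cases a with
  | eq i k => exact hj.injective.eq_iff.trans Subtype.ext_iff
  | rel R v => exact (hj.relMap_iff R (x ∘ v)).symm
  | func F v i => exact (hj.funMap_eq_iff F (x ∘ v) (x i)).symm

/-- Equal flat types make `b i ↦ c i` well defined, and then a fragment map. -/
theorem isFragmentMap_of_flatType_eq {b : Fin m → B} {c : Fin m → C}
    (h : flatType L b = flatType L c) :
    IsFragmentMap L (Set.range b) (c ∘ Set.rangeSplitting b) := by
  have hiff (a : FlatAtom L m) : a.Holds b ↔ a.Holds c := Set.ext_iff.1 h a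
  have hval {n : ℕ} (x : Fin n → Set.range b) :
      (fun k => (x k : B)) = b ∘ (Set.rangeSplitting b ∘ x) :=
    funext fun k => (Set.apply_rangeSplitting b (x k)).symm
  refine ⟨fun x y hxy => ?_, fun R x => ?_, fun F x y => ?_⟩
  · rw [← Subtype.coe_inj, ← Set.apply_rangeSplitting b x, ← Set.apply_rangeSplitting b y]
    exact (hiff (.eq _ _)).2 hxy
  · rw [hval]
    exact hiff (.rel R _)
  · rw [hval, ← Set.apply_rangeSplitting b y]
    exact hiff (.func F _ _)

theorem HasFragment.of_flatType_eq {b : Fin m → B} {c : Fin m → C}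
    (h : flatType L b = flatType L c) (hc : HasFragment L (Set.range c) N) :
    HasFragment L (Set.range b) N :=
  hc.of_isFragmentMap (t := Set.range c) (isFragmentMap_of_flatType_eq h) fun _ =>
    Set.mem_range_self _

end FlatType

namespace FirstOrder.Language.BoundedFormula

variable {L : Language} {α β : Type*} {n : ℕ}

theorem isQF_foldr_sup {l : List (L.BoundedFormula α n)} (h : ∀ φ ∈ l, φ.IsQF) :
    (l.foldr (· ⊔ ·) ⊥).IsQF := by
  induction l with
  | nil => exact isQF_bot
  | cons φ l ih => exact (h φ List.mem_cons_self).sup (ih fun ψ hψ => h ψ (.tail _ hψ))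

theorem isQF_foldr_inf {l : List (L.BoundedFormula α n)} (h : ∀ φ ∈ l, φ.IsQF) :
    (l.foldr (· ⊓ ·) ⊤).IsQF := by
  induction l with
  | nil => exact IsQF.top
  | cons φ l ih => exact (h φ List.mem_cons_self).inf (ih fun ψ hψ => h ψ (.tail _ hψ))

theorem isQF_iSup [Finite β] {f : β → L.BoundedFormula α n} (h : ∀ b, (f b).IsQF) :
    (iSup f).IsQF :=
  isQF_foldr_sup (by simpa using fun b => h b)

theorem isQF_iInf [Finite β] {f : β → L.BoundedFormula α n} (h : ∀ b, (f b).IsQF) :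
    (iInf f).IsQF :=
  isQF_foldr_inf (by simpa using fun b => h b)

end FirstOrder.Language.BoundedFormula

section Definability

open BoundedFormula

variable {L : Language} {m : ℕ} [Finite (FlatAtom L m)]

noncomputable def flatTypeFormula (T : Set (FlatAtom L m)) : L.BoundedFormula Empty m :=
  (iInf fun a : T => a.1.formula) ⊓ iInf fun a : ↥Tᶜ => a.1.formula.not

theorem isQF_flatTypeFormula (T : Set (FlatAtom L m)) : (flatTypeFormula T).IsQF :=
  (isQF_iInf fun a => a.1.isQF_formula).inf (isQF_iInf fun a => a.1.isQF_formula.not)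

theorem realize_flatTypeFormula {M : Type*} [L.Structure M] {T : Set (FlatAtom L m)}
    {v : Empty → M} {y : Fin m → M} :
    (flatTypeFormula T).Realize v y ↔ flatType L y = T := by
  simp only [flatTypeFormula, realize_inf, realize_iInf, realize_not, FlatAtom.realize_formula,
    Subtype.forall, Set.mem_compl_iff, Set.ext_iff, flatType, Set.mem_ofPred_eq]
  exact ⟨fun h a => ⟨fun ha => by_contra fun hT => h.2 a hT ha, h.1 a⟩,
    fun h => ⟨fun a => (h a).2, fun a hT ha => hT ((h a).1 ha)⟩⟩

theorem exists_isQF_realize_iff (Q : Set (FlatAtom L m) → Prop) :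
    ∃ χ : L.BoundedFormula Empty m, χ.IsQF ∧ ∀ (M : Type*) [L.Structure M] (v : Empty → M)
      (y : Fin m → M), χ.Realize v y ↔ Q (flatType L y) :=
  ⟨iSup fun T : {T // Q T} => flatTypeFormula T.1, isQF_iSup fun _ => isQF_flatTypeFormula _,
    fun M _ v y => by simp [realize_flatTypeFormula]⟩

end Definability

theorem Ultrafilter.eventually_iff_of_iff_eventually {ι : Type*} {U : Ultrafilter ι}
    {p : ι → Prop} {P : Prop} (h : P ↔ ∀ᶠ i in U, p i) : ∀ᶠ i in U, p i ↔ P := by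
  by_cases hP : P
  · exact (h.1 hP).mono fun _ hi => iff_of_true hi hP
  · exact (Ultrafilter.eventually_not.2 (mt h.2 hP)).mono fun _ hi => iff_of_false hi hP

section Ultraproduct

variable {L : Language} {m : ℕ} {ι : Type*} {U : Ultrafilter ι} {M : ι → Type*}
  [∀ i, L.Structure (M i)] [∀ i, Nonempty (M i)]

theorem FlatAtom.holds_cast_iff (a : FlatAtom L m) (y : Fin m → ∀ i, M i) :
    a.Holds (fun k => (y k : (U : Filter ι).Product M)) ↔ ∀ᶠ i in U, a.Holds fun k => y k i := by
  simpa using Ultraproduct.boundedFormula_realize_cast (u := U) a.formula isEmptyElim y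

theorem eventually_flatType_eq [Finite (FlatAtom L m)] (y : Fin m → ∀ i, M i) :
    ∀ᶠ i in U, flatType L (fun k => y k i) =
      flatType L (fun k => (y k : (U : Filter ι).Product M)) := by
  have h (a : FlatAtom L m) :=
    Ultrafilter.eventually_iff_of_iff_eventually (a.holds_cast_iff (U := U) y)
  filter_upwards [Filter.eventually_all.2 h] with i hi
  exact Set.ext hi

end Ultraproduct

theorem nonempty_embedding_product_of_hasFragment {L : Language} {B : Type*} [L.Structure B]
    {N : Finset B → Type*} [∀ t, L.Structure (N t)] [∀ t, Nonempty (N t)]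
    (h : ∀ t : Finset B, HasFragment L (t : Set B) (N t)) {U : Ultrafilter (Finset B)}
    (hU : (U : Filter (Finset B)) ≤ Filter.atTop) :
    Nonempty (B ↪[L] (U : Filter (Finset B)).Product N) := by
  classical
  choose j hj using fun t => hasFragment_iff.1 (h t)
  let g (b : B) (t : Finset B) : N t := if hb : b ∈ t then j t ⟨b, hb⟩ else Classical.arbitrary _
  refine ⟨Embedding.ofFlatAtomHolds (fun b => (g b : (U : Filter (Finset B)).Product N))
    fun {m} x a => (a.holds_cast_iff fun k => g (x k)).trans ?_⟩
  have hx : ∀ᶠ t in (U : Filter (Finset B)), ∀ k, x k ∈ t :=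
    ((Filter.eventually_ge_atTop (Finset.univ.image x)).filter_mono hU).mono
      fun t ht k => ht (Finset.mem_image_of_mem x (Finset.mem_univ k))
  have hev : ∀ᶠ t in U, a.Holds (fun k => g (x k) t) ↔ a.Holds x := by
    filter_upwards [hx] with t ht
    have hg : (fun k => g (x k) t) = j t ∘ fun k => ⟨x k, ht k⟩ := funext fun k => dif_pos (ht k)
    rw [hg]
    exact (hj t).holds_comp_iff _ a
  exact (Filter.eventually_congr hev).trans Filter.eventually_const

theorem Set.ncard_range_le {α ι : Type*} [Finite ι] (f : ι → α) :
    (Set.range f).ncard ≤ Nat.card ι :=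
  (Nat.card_coe_set_eq _).symm.trans_le (Finite.card_range_le f)

theorem Set.Finite.exists_fin_subset_range {α : Type*} [Nonempty α] {s : Set α} (hs : s.Finite)
    {n : ℕ} (hn : s.ncard ≤ n) : ∃ b : Fin n → α, s ⊆ Set.range b := by
  classical
  obtain ⟨k, f, rfl⟩ := hs.fin_embedding
  have hk : k ≤ n := by rwa [Set.ncard_range_of_injective f.injective, Nat.card_fin] at hn
  refine ⟨fun i => if h : (i : ℕ) < k then f ⟨i, h⟩ else Classical.arbitrary α, ?_⟩
  rintro _ ⟨i, rfl⟩
  exact ⟨Fin.castLE hk i, dif_pos i.2⟩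

section Theta

variable {L : Language} {M N : Type*} [L.Structure M] [L.Structure N]

/-- The property `θ(φ)` of the paper. -/
def HasSubmodel (φ : L.Sentence) (M : Type*) [L.Structure M] : Prop :=
  ∃ S : L.Substructure M, (S : Type _) ⊨ φ

def Forces (φ : L.Sentence) {B : Type u} [L.Structure B] (s : Set B) : Prop :=
  ∀ (N : Type u) [L.Structure N], Nonempty N → HasFragment L s N → HasSubmodel φ N

def IsForcingType {n : ℕ} (φ : L.Sentence) (T : Set (FlatAtom L n)) : Prop :=
  ∀ (N : Type u) [L.Structure N], Nonempty N → ∀ z : Fin n → N, flatType L z = T →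
    HasSubmodel φ N

theorem hasSubmodel_of_embedding {φ : L.Sentence} (f : M ↪[L] N) (h : M ⊨ φ) :
    HasSubmodel φ N :=
  ⟨f.toHom.range, (StrongHomClass.realize_sentence f.equivRange φ).1 h⟩

theorem nonempty_embedding_of_isEmpty [IsEmpty M]
    (h : ∀ R : L.Relations 0, RelMap R (default : Fin 0 → M) ↔ RelMap R (default : Fin 0 → N)) :
    Nonempty (M ↪[L] N) :=
  ⟨{ toFun := isEmptyElim
     inj' := fun a => isEmptyElim a
     map_fun' := fun F x => isEmptyElim (funMap F x)
     map_rel' := fun {n} R x => by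
       cases n with
       | zero => rw [Subsingleton.elim x default, Subsingleton.elim (isEmptyElim ∘ _) default]
                 exact (h R).symm
       | succ n => exact isEmptyElim (x 0) }⟩

end Theta

section Implications

variable {L : Language} {φ : L.Sentence}

theorem exists_finite_forces_of_realize_iff_hasSubmodel {χ : L.Sentence}
    (hχ : ∀ (M : Type u) [L.Structure M], Nonempty M → (M ⊨ χ ↔ HasSubmodel φ M))
    {B : Type u} [L.Structure B] (hB : B ⊨ φ) : ∃ s : Set B, s.Finite ∧ Forces φ s := by
  by_contra! hcon
  have hbad (t : Finset B) : ∃ (N : Type u) (_ : L.Structure N), Nonempty N ∧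
      HasFragment L (t : Set B) N ∧ ¬N ⊨ χ := by
    have := hcon _ t.finite_toSet
    simp only [Forces, not_forall] at this
    obtain ⟨N, _, hN, hfr, hθ⟩ := this
    exact ⟨N, _, hN, hfr, fun h => hθ ((hχ N hN).1 h)⟩
  choose N _ hN hfr hχN using hbad
  let U := Ultrafilter.of (Filter.atTop : Filter (Finset B))
  obtain ⟨f⟩ :=
    nonempty_embedding_product_of_hasFragment hfr (Ultrafilter.of_le (f := Filter.atTop))
  have hUχ : (U : Filter (Finset B)).Product N ⊨ χ :=
    (hχ _ inferInstance).2 (hasSubmodel_of_embedding f hB)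
  obtain ⟨t, ht⟩ := ((Ultraproduct.sentence_realize χ).1 hUχ).exists
  exact hχN t ht

theorem exists_bound_forces_of_exists_finite_forces [Finite (Σ k, L.Functions k)]
    [Finite (Σ k, L.Relations k)]
    (h : ∀ (B : Type u) [L.Structure B], Nonempty B → B ⊨ φ → ∃ s : Set B, s.Finite ∧ Forces φ s) :
    ∃ n : ℕ, ∀ (B : Type u) [L.Structure B], Nonempty B → B ⊨ φ →
      ∃ s : Set B, s.Finite ∧ s.ncard ≤ n ∧ Forces φ s := by
  by_contra! hcon
  choose B _ hB hBφ hbad using hcon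
  let U := Ultrafilter.of (Filter.atTop : Filter ℕ)
  obtain ⟨s, hs, hforce⟩ :=
    h ((U : Filter ℕ).Product B) inferInstance
      ((Ultraproduct.sentence_realize φ).2 (.of_forall hBφ))
  obtain ⟨m, e, rfl⟩ := hs.fin_embedding
  choose y hy using fun k => Quotient.exists_rep (e k)
  obtain ⟨n, hn, hmn⟩ := ((eventually_flatType_eq (L := L) (U := U) y).and
    ((Filter.eventually_ge_atTop m).filter_mono (Ultrafilter.of_le _))).exists
  refine hbad n _ (Set.finite_range fun k => y k n)
    ((Set.ncard_range_le _).trans (by simpa using hmn)) fun N _ hN hfr => hforce N hN ?_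
  have he : Set.range e = Set.range fun k => (y k : (U : Filter ℕ).Product B) :=
    congrArg Set.range (funext fun k => (hy k).symm)
  rw [he]
  exact hfr.of_flatType_eq hn.symm

theorem exists_isForcingType_flatType {n : ℕ}
    (h : ∀ (B : Type u) [L.Structure B], Nonempty B → B ⊨ φ →
      ∃ s : Set B, s.Finite ∧ s.ncard ≤ n ∧ Forces φ s)
    {M : Type u} [L.Structure M] [Nonempty M] {S : L.Substructure M} (hS : S ⊨ φ) :
    ∃ y : Fin n → M, IsForcingType.{u} φ (flatType L y) := by
  rcases isEmpty_or_nonempty S with hSe | hSne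
  · obtain ⟨y⟩ : Nonempty (Fin n → M) := inferInstance
    refine ⟨y, fun N _ _ z hz => ?_⟩
    -- `S` is the empty substructure, so only the nullary relations have to match
    have hrel (R : L.Relations 0) :
        RelMap R (default : Fin 0 → S) ↔ RelMap R (default : Fin 0 → N) := by
      have hR : RelMap R (y ∘ default) ↔ RelMap R (z ∘ default) :=
        (Set.ext_iff.1 hz (.rel R default)).symm
      show RelMap R (fun i => ((default : Fin 0 → S) i : M)) ↔ _
      convert hR using 2
    obtain ⟨f⟩ := nonempty_embedding_of_isEmpty hrel
    exact hasSubmodel_of_embedding f hS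
  · obtain ⟨s, hs, hsn, hforce⟩ := h S inferInstance hS
    obtain ⟨b, hb⟩ := hs.exists_fin_subset_range hsn
    refine ⟨S.subtype ∘ b, fun N _ hN z hz => hforce N hN ?_⟩
    rw [flatType_embedding_comp] at hz
    exact ((hasFragment_self _).of_flatType_eq hz.symm).mono hb

theorem exists_isQF_exs_iff_hasSubmodel [Finite (Σ k, L.Functions k)]
    [Finite (Σ k, L.Relations k)] {n : ℕ}
    (h : ∀ (B : Type u) [L.Structure B], Nonempty B → B ⊨ φ →
      ∃ s : Set B, s.Finite ∧ s.ncard ≤ n ∧ Forces φ s) :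
    ∃ χ : L.BoundedFormula Empty n, χ.IsQF ∧
      ∀ (M : Type u) [L.Structure M], Nonempty M → (M ⊨ χ.exs ↔ HasSubmodel φ M) := by
  obtain ⟨χ, hqf, hχ⟩ := exists_isQF_realize_iff (IsForcingType.{u} φ (n := n))
  refine ⟨χ, hqf, fun M _ hM => BoundedFormula.realize_exs.trans ?_⟩
  exact ⟨fun ⟨y, hy⟩ => (hχ M default y).1 hy M hM y rfl,
    fun ⟨S, hS⟩ => (exists_isForcingType_flatType h hS).imp fun y hy => (hχ M default y).2 hy⟩

end Implications

/-- main theorem, case κ = ω: for a finite language `L` and a sentence `φ`,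
the following are equivalent: (i) `θ(φ)` is expressible by an existential sentence;
(ii) `θ(φ)` is expressible by a first-order sentence; (iii) every nonempty model of `φ` has a
finite fragment forcing `θ(φ)` in every nonempty structure having that fragment; (iv) there is
a uniform finite bound `n` on the size of such fragments. -/
theorem theta_firstOrder_expressibility_tfae {L : FirstOrder.Language}
    [Finite (Σ k, L.Functions k)] [Finite (Σ k, L.Relations k)] (φ : L.Sentence) :
    List.TFAE
      [∃ (m : ℕ) (χ : L.BoundedFormula Empty m), χ.IsQF ∧
          ∀ (M : Type u) [L.Structure M], Nonempty M →
            (M ⊨ χ.exs ↔ ∃ S : L.Substructure M, (S : Type _) ⊨ φ),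
        ∃ χ : L.Sentence, ∀ (M : Type u) [L.Structure M], Nonempty M →
          (M ⊨ χ ↔ ∃ S : L.Substructure M, (S : Type _) ⊨ φ),
        ∀ (B : Type u) [L.Structure B], Nonempty B → B ⊨ φ →
          ∃ s : Set B, s.Finite ∧
            ∀ (N : Type u) [L.Structure N], Nonempty N → HasFragment L s N →
              ∃ S : L.Substructure N, (S : Type _) ⊨ φ,
        ∃ n : ℕ, ∀ (B : Type u) [L.Structure B], Nonempty B → B ⊨ φ →
          ∃ s : Set B, s.Finite ∧ s.ncard ≤ n ∧
            ∀ (N : Type u) [L.Structure N], Nonempty N → HasFragment L s N →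
              ∃ S : L.Substructure N, (S : Type _) ⊨ φ] := by
  tfae_have 1 → 2 := fun ⟨_, χ, _, hχ⟩ => ⟨χ.exs, hχ⟩
  tfae_have 2 → 3 := fun ⟨_, hχ⟩ _ _ _ hB => exists_finite_forces_of_realize_iff_hasSubmodel hχ hB
  tfae_have 3 → 4 := exists_bound_forces_of_exists_finite_forces
  tfae_have 4 → 1 := fun ⟨n, h⟩ => ⟨n, exists_isQF_exs_iff_hasSubmodel h⟩
  tfae_finish
end

section
/- Let L be a first-order language with no function symbols and no constant symbols (a purely relational language) and φ an L-sentence. The following are equivalent: (i) there is an L-sentence χ such that for every nonempty L-structure M, M satisfies χ if and only if M has a nonempty substructure satisfying φ; (ii) every nonempty L-structure satisfying φ has a finite nonempty substructure satisfying φ; (iii) there is a natural number n such that every nonempty L-structure satisfying φ has a nonempty substructure with at most n elements satisfying φ. -/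
/-!
(iii) ⇒ (i): relativizing `φ` to the substructure on `n + 1` existentially quantified points
gives a sentence true exactly when a substructure with at most `n + 1` elements satisfies `φ`;
under (iii) it expresses `θ(φ)`, because a substructure of a substructure is a substructure.

(ii) ⇒ (iii): otherwise pick, for each `n`, a model `Mₙ` of `φ` with no nonempty substructure of
at most `n` elements satisfying `φ`; by Łoś a nonprincipal ultraproduct of the `Mₙ` is a model of
`φ` with no finite nonempty substructure satisfying `φ`.

(i) ⇒ (ii): a nonempty model `N` of `φ` embeds into an ultraproduct of finite substructures of
`N`, which therefore satisfies `θ(φ)`, hence `χ`; by Łoś so does one of the finite factors, which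
thus has a nonempty substructure satisfying `φ`.
-/

open FirstOrder Language

universe u

namespace FirstOrder.Language

open Structure Substructure Set

variable {L : Language} {M : Type*} [L.Structure M] {n : ℕ}

def closureRangeFactorization (L : Language) [L.Structure M] (x : Fin n → M)
    (i : Fin n) : closure L (range x) :=
  ⟨x i, subset_closure (mem_range_self i)⟩

theorem closureRangeFactorization_surjective [L.IsRelational] (x : Fin n → M) :
    Function.Surjective (closureRangeFactorization L x) := by
  rintro ⟨a, ha⟩
  obtain ⟨i, rfl⟩ := (mem_closure_iff_of_isRelational L _ a).1 ha
  exact ⟨i, rfl⟩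

variable {α : Type*}

theorem Term.realize_relabel_sumElim {m : ℕ} (x : Fin n → M) (v : α → Fin n)
    (σ : Fin m → Fin n) (t : L.Term (α ⊕ Fin m)) :
    (t.relabel (Sum.elim v σ)).realize x = t.realize
      (Sum.elim (closureRangeFactorization L x ∘ v) (closureRangeFactorization L x ∘ σ)) := by
  rw [Term.realize_relabel, ← realize_term_substructure]
  congr 1
  ext (i | i) <;> rfl

namespace BoundedFormula

/-- Relativization of `ψ` to the substructure on `n` points: quantifiers range over the points,
and `v`, `σ` say which points the free and the bound variables denote. -/
noncomputable def relativize :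
    ∀ {m : ℕ}, L.BoundedFormula α m → (α → Fin n) → (Fin m → Fin n) → L.Formula (Fin n)
  | _, falsum, _, _ => ⊥
  | _, equal t₁ t₂, v, σ => (t₁.relabel (Sum.elim v σ)).equal (t₂.relabel (Sum.elim v σ))
  | _, rel R ts, v, σ => R.formula fun i => (ts i).relabel (Sum.elim v σ)
  | _, imp ψ₁ ψ₂, v, σ => (relativize ψ₁ v σ).imp (relativize ψ₂ v σ)
  | _, all ψ, v, σ => Formula.iInf fun i : Fin n => relativize ψ v (Fin.snoc σ i)

theorem realize_relativize [L.IsRelational] (x : Fin n → M) (v : α → Fin n) {m : ℕ}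
    (ψ : L.BoundedFormula α m) (σ : Fin m → Fin n) :
    (ψ.relativize v σ).Realize x ↔
      ψ.Realize (closureRangeFactorization L x ∘ v) (closureRangeFactorization L x ∘ σ) := by
  induction ψ with
  | falsum => rfl
  | equal t₁ t₂ =>
    simp only [relativize, Formula.realize_equal, Term.realize_relabel_sumElim]
    exact Subtype.ext_iff.symm
  | rel R ts =>
    simp only [relativize, Formula.realize_rel, Term.realize_relabel_sumElim]
    rfl
  | imp ψ₁ ψ₂ ih₁ ih₂ => simp only [relativize, Formula.realize_imp, realize_imp, ih₁, ih₂]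
  | all ψ ih =>
    simp only [relativize, Formula.realize_iInf, ih, Fin.comp_snoc, realize_all,
      (closureRangeFactorization_surjective (L := L) x).forall]

end BoundedFormula

theorem _root_.Set.Finite.exists_fin_range_eq {β : Type*} {s : Set β} (hs : s.Finite)
    (hne : s.Nonempty) (hn : s.ncard ≤ n) : ∃ x : Fin n → β, range x = s := by
  have : Finite s := hs
  have hemb : Nonempty (s ↪ Fin n) :=
    ⟨(Finite.equivFin s).toEmbedding.trans (Fin.castLEEmb (Nat.card_coe_set_eq s ▸ hn))⟩
  obtain ⟨f, hf⟩ := Function.exists_surjective_iff.2 ⟨⟨fun _ => ⟨_, hne.some_mem⟩⟩, hemb⟩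
  exact ⟨Subtype.val ∘ f, by rw [hf.range_comp, Subtype.range_coe]⟩

theorem _root_.Set.ncard_range_fin_le {β : Type*} (x : Fin n → β) : (range x).ncard ≤ n := by
  simpa using ncard_image_le (f := x) (s := univ) finite_univ

namespace Sentence

noncomputable def existsSubstructureOfCardLE (φ : L.Sentence) (n : ℕ) : L.Sentence :=
  Formula.iExs (Fin n) ((φ.relativize Empty.elim Fin.elim0).relabel Sum.inr)

variable [L.IsRelational]

theorem realize_existsSubstructureOfCardLE_iff_exists_fin (φ : L.Sentence) :
    M ⊨ φ.existsSubstructureOfCardLE n ↔ ∃ x : Fin n → M, closure L (range x) ⊨ φ := by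
  simp only [Sentence.Realize, existsSubstructureOfCardLE, Formula.realize_iExs,
    Formula.realize_relabel, Sum.elim_comp_inr, BoundedFormula.realize_relativize]
  refine exists_congr fun x => ?_
  rw [Subsingleton.elim (closureRangeFactorization L x ∘ _) default,
    Subsingleton.elim (closureRangeFactorization L x ∘ _) default]
  rfl

theorem realize_existsSubstructureOfCardLE (φ : L.Sentence) (hn : 0 < n) :
    M ⊨ φ.existsSubstructureOfCardLE n ↔ ∃ S : L.Substructure M, (S : Set M).Nonempty ∧
      (S : Set M).Finite ∧ (S : Set M).ncard ≤ n ∧ S ⊨ φ := by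
  rw [realize_existsSubstructureOfCardLE_iff_exists_fin]
  constructor
  · rintro ⟨x, hx⟩
    refine ⟨closure L (range x), ?_, ?_, ?_, hx⟩ <;>
      rw [closure_eq_of_isRelational]
    exacts [range_nonempty_iff_nonempty.2 ⟨⟨0, hn⟩⟩, finite_range x, ncard_range_fin_le x]
  · rintro ⟨S, hne, hfin, hcard, hS⟩
    obtain ⟨x, hx⟩ := hfin.exists_fin_range_eq hne hcard
    refine ⟨x, ?_⟩
    rwa [show closure L (range x) = S from SetLike.coe_injective (by simp [hx])]

end Sentence

theorem exists_model_forall_not_realize {φ : L.Sentence} {ψ : ℕ → L.Sentence}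
    (h : ∀ n, ∃ (M : Type u) (_ : L.Structure M), Nonempty M ∧ M ⊨ φ ∧ ∀ k ≤ n, ¬ M ⊨ ψ k) :
    ∃ (M : Type u) (_ : L.Structure M), Nonempty M ∧ M ⊨ φ ∧ ∀ k, ¬ M ⊨ ψ k := by
  choose M _ _ hφ hψ using h
  let U := Filter.hyperfilter ℕ
  refine ⟨(U : Filter ℕ).Product M, inferInstance, inferInstance,
    (Ultraproduct.sentence_realize φ).2 (.of_forall hφ), fun k hk => ?_⟩
  have hge : ∀ᶠ n in (U : Filter ℕ), k ≤ n :=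
    Filter.hyperfilter_le_cofinite (Nat.cofinite_eq_atTop ▸ Filter.eventually_ge_atTop k)
  obtain ⟨n, hkn, hn⟩ := (hge.and ((Ultraproduct.sentence_realize _).1 hk)).exists
  exact hψ n k hkn hn

theorem Substructure.realize_sentence_map_subtype (S : L.Substructure M) (T : L.Substructure S)
    (φ : L.Sentence) : T.map S.subtype.toHom ⊨ φ ↔ T ⊨ φ :=
  (StrongHomClass.realize_sentence (S.subtype.substructureEquivMap T) φ).symm

section FiniteApproximation

open Filter

variable (n₀ : M)

/-- `n₀` keeps every factor nonempty: a single empty factor would make the ultraproduct empty. -/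
abbrev finiteApprox (t : Finset M) : L.Substructure M := closure L (insert n₀ (t : Set M))

theorem finite_finiteApprox [L.IsRelational] (t : Finset M) :
    (finiteApprox (L := L) n₀ t : Set M).Finite := by
  rw [finiteApprox, closure_eq_of_isRelational]
  exact t.finite_toSet.insert n₀

open scoped Classical in
noncomputable def toFiniteApprox (s : M) (t : Finset M) : finiteApprox (L := L) n₀ t :=
  if h : s ∈ t then ⟨s, subset_closure (mem_insert_of_mem _ h)⟩
  else ⟨n₀, subset_closure (mem_insert _ _)⟩

local notation "𝒰" => (Ultrafilter.of (atTop : Filter (Finset M)) : Filter (Finset M))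

theorem eventually_coe_toFiniteApprox {k : ℕ} (v : Fin k → M) :
    ∀ᶠ t in 𝒰, (fun i => (toFiniteApprox (L := L) n₀ (v i) t : M)) = v := by
  classical
  refine Ultrafilter.of_le _ ((eventually_ge_atTop (Finset.univ.image v)).mono fun t ht => ?_)
  funext i
  simp [toFiniteApprox, ht (Finset.mem_image_of_mem v (Finset.mem_univ i))]

noncomputable def embeddingUltraproductFiniteApprox [L.IsRelational] :
    M ↪[L] Filter.Product 𝒰 fun t => finiteApprox (L := L) n₀ t where
  toFun s := ↑(toFiniteApprox (L := L) n₀ s)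
  inj' s s' h := by
    have hss' : ∀ᶠ t in 𝒰, toFiniteApprox (L := L) n₀ s t = toFiniteApprox n₀ s' t :=
      Quotient.exact' h
    obtain ⟨t, ht, hv⟩ := (hss'.and (eventually_coe_toFiniteApprox (L := L) n₀ ![s, s'])).exists
    exact (congrFun hv 0).symm.trans ((congrArg Subtype.val ht).trans (congrFun hv 1))
  map_fun' f := isEmptyElim f
  map_rel' {k} r v := by
    have hv : ∀ᶠ t in 𝒰, (RelMap r fun i => toFiniteApprox (L := L) n₀ (v i) t) ↔ RelMap r v :=
      (eventually_coe_toFiniteApprox n₀ v).mono fun t ht => by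
        change RelMap r (fun i => (toFiniteApprox (L := L) n₀ (v i) t : M)) ↔ _
        rw [ht]
    exact (relMap_quotient_mk' (s := productSetoid _ _) r _).trans
      ((eventually_congr hv).trans eventually_const)

end FiniteApproximation

variable [L.IsRelational] {φ : L.Sentence}

theorem exists_finite_substructure_of_forall_realize_iff {χ : L.Sentence}
    (hχ : ∀ (M : Type u) [L.Structure M], Nonempty M →
      (M ⊨ χ ↔ ∃ S : L.Substructure M, (S : Set M).Nonempty ∧ S ⊨ φ))
    (N : Type u) [L.Structure N] [Nonempty N] (hN : N ⊨ φ) :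
    ∃ S : L.Substructure N, (S : Set N).Nonempty ∧ (S : Set N).Finite ∧ S ⊨ φ := by
  obtain ⟨n₀⟩ := ‹Nonempty N›
  let e := embeddingUltraproductFiniteApprox (L := L) n₀
  have hP : _ ⊨ χ := (hχ _ ⟨e n₀⟩).2 ⟨e.toHom.range, ⟨e n₀, Hom.mem_range_self _ _⟩,
    (StrongHomClass.realize_sentence e.equivRange φ).1 hN⟩
  have hne (t : Finset N) : Nonempty (finiteApprox (L := L) n₀ t) := ⟨toFiniteApprox n₀ n₀ t⟩
  obtain ⟨t, ht⟩ := ((Ultraproduct.sentence_realize χ).1 hP).exists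
  obtain ⟨T, hTne, hT⟩ := (hχ _ (hne t)).1 ht
  have := (finite_finiteApprox (L := L) n₀ t).to_subtype
  refine ⟨T.map (finiteApprox n₀ t).subtype.toHom, ?_, ?_,
    (Substructure.realize_sentence_map_subtype _ T φ).2 hT⟩ <;> rw [coe_map]
  exacts [hTne.image _, (toFinite _).image _]

theorem exists_bound_of_forall_exists_finite_substructure
    (h : ∀ (M : Type u) [L.Structure M], Nonempty M → M ⊨ φ →
      ∃ S : L.Substructure M, (S : Set M).Nonempty ∧ (S : Set M).Finite ∧ S ⊨ φ) :
    ∃ n : ℕ, ∀ (M : Type u) [L.Structure M], Nonempty M → M ⊨ φ →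
      ∃ S : L.Substructure M, (S : Set M).Nonempty ∧ (S : Set M).Finite ∧
        (S : Set M).ncard ≤ n ∧ S ⊨ φ := by
  by_contra! hunbdd
  obtain ⟨N, _, hN, hNφ, hNψ⟩ := exists_model_forall_not_realize
    (ψ := fun k => φ.existsSubstructureOfCardLE (k + 1)) fun n => by
      obtain ⟨M, _, hM, hMφ, hsmall⟩ := hunbdd (n + 1)
      refine ⟨M, _, hM, hMφ, fun k hk hMψ => ?_⟩
      obtain ⟨S, hSne, hSfin, hScard, hS⟩ :=
        (Sentence.realize_existsSubstructureOfCardLE φ k.succ_pos).1 hMψ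
      exact hsmall S hSne hSfin (by omega) hS
  obtain ⟨S, hSne, hSfin, hS⟩ := h N hN hNφ
  obtain ⟨k, hk⟩ := Nat.exists_eq_add_one.2 ((ncard_pos hSfin).2 hSne)
  exact hNψ k ((Sentence.realize_existsSubstructureOfCardLE φ k.succ_pos).2
    ⟨S, hSne, hSfin, hk.le, hS⟩)

theorem realize_existsSubstructureOfCardLE_iff_of_bound
    (h : ∀ (M : Type u) [L.Structure M], Nonempty M → M ⊨ φ →
      ∃ S : L.Substructure M, (S : Set M).Nonempty ∧ (S : Set M).Finite ∧
        (S : Set M).ncard ≤ n ∧ S ⊨ φ)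
    (M : Type u) [L.Structure M] :
    M ⊨ φ.existsSubstructureOfCardLE (n + 1) ↔
      ∃ S : L.Substructure M, (S : Set M).Nonempty ∧ S ⊨ φ := by
  rw [Sentence.realize_existsSubstructureOfCardLE φ n.succ_pos]
  refine ⟨fun ⟨S, hne, _, _, hS⟩ => ⟨S, hne, hS⟩, fun ⟨S, hne, hS⟩ => ?_⟩
  obtain ⟨T, hTne, hTfin, hTcard, hT⟩ := h S hne.to_subtype hS
  refine ⟨T.map S.subtype.toHom, ?_, ?_, ?_,
    (Substructure.realize_sentence_map_subtype S T φ).2 hT⟩ <;> rw [coe_map]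
  exacts [hTne.image _, hTfin.image _,
    (ncard_image_of_injective _ S.subtype.injective).trans_le (by omega)]

end FirstOrder.Language

/-- Corollary for predicate signatures, case κ = ω: for a purely relational
language `L` and a sentence `φ`, the following are equivalent: (i) `θ(φ)` is expressible by
a first-order sentence over nonempty structures; (ii) every nonempty model of `φ` has a
finite nonempty substructure satisfying `φ`; (iii) there is `n : ℕ` such that every nonempty
model of `φ` has a nonempty substructure of at most `n` elements satisfying `φ`. -/
theorem theta_expressibility_tfae_relational {L : FirstOrder.Language} [L.IsRelational]
    (φ : L.Sentence) :
    List.TFAE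
      [∃ χ : L.Sentence, ∀ (M : Type u) [L.Structure M], Nonempty M →
          (M ⊨ χ ↔ ∃ S : L.Substructure M, (S : Set M).Nonempty ∧ (S : Type _) ⊨ φ),
        ∀ (M : Type u) [L.Structure M], Nonempty M → M ⊨ φ →
          ∃ S : L.Substructure M, (S : Set M).Nonempty ∧ (S : Set M).Finite ∧
            (S : Type _) ⊨ φ,
        ∃ n : ℕ, ∀ (M : Type u) [L.Structure M], Nonempty M → M ⊨ φ →
          ∃ S : L.Substructure M, (S : Set M).Nonempty ∧ (S : Set M).Finite ∧
            (S : Set M).ncard ≤ n ∧ (S : Type _) ⊨ φ] := by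
  tfae_have 1 → 2 := fun ⟨_, hχ⟩ M _ hM hφ =>
    have := hM; exists_finite_substructure_of_forall_realize_iff hχ M hφ
  tfae_have 2 → 3 := exists_bound_of_forall_exists_finite_substructure
  tfae_have 3 → 1 := fun ⟨_, hn⟩ =>
    ⟨_, fun M _ _ => realize_existsSubstructureOfCardLE_iff_of_bound hn M⟩
  tfae_finish
end
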